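/- arXiv:1703.10511 — 5 statements merged into one kernel-verified Lean document; each statement's English description precedes it below -/
import Mathlib

section
/- Let Y = U Vᵀ be a rank-k nonnegative decomposition of the matrix Y ∈ ℝ^{m×n}, i.e. U ∈ ℝ^{m×k} and V ∈ ℝ^{n×k} have all entries nonnegative, and write u_i, v_i for the i-th columns of U and V. For each i ∈ {1,…,k} let X_i be a maximum-weight matching matrix for the rank-1 matrix u_i v_iᵀ and let f_i = X_i • (u_i v_iᵀ) be its weight. If f* = max_{1≤i≤k} f_i, then for every matching matrix X one has X • Y ≤ k · f*; in particular f* is a 1/k-approximation to the maximum-weight matching value on Y. -/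
open Matrix

/-- A matching matrix: entries in {0,1}, row sums ≤ 1, column sums ≤ 1. -/
def IsMatchingMatrix {m n : ℕ} (X : Matrix (Fin m) (Fin n) ℝ) : Prop :=
  (∀ i j, X i j = 0 ∨ X i j = 1) ∧
  (∀ i, ∑ j, X i j ≤ 1) ∧
  (∀ j, ∑ i, X i j ≤ 1)

/-- Matrix inner product A • B = ∑ᵢⱼ Aᵢⱼ Bᵢⱼ. -/
def matDot {m n : ℕ} (A B : Matrix (Fin m) (Fin n) ℝ) : ℝ :=
  ∑ i, ∑ j, A i j * B i j

theorem simple_one_over_k_approximation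
    {m n k : ℕ} (hk : 0 < k)
    (U : Matrix (Fin m) (Fin k) ℝ) (V : Matrix (Fin n) (Fin k) ℝ)
    (hU : ∀ i j, 0 ≤ U i j) (hV : ∀ i j, 0 ≤ V i j)
    (Y : Matrix (Fin m) (Fin n) ℝ) (hY : Y = U * Vᵀ)
    (X : Fin k → Matrix (Fin m) (Fin n) ℝ)
    (hXmatch : ∀ i, IsMatchingMatrix (X i))
    (hXopt : ∀ i (X' : Matrix (Fin m) (Fin n) ℝ), IsMatchingMatrix X' →
      matDot X' (Matrix.vecMulVec (fun r => U r i) (fun c => V c i)) ≤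
      matDot (X i) (Matrix.vecMulVec (fun r => U r i) (fun c => V c i)))
    (f : Fin k → ℝ)
    (hf : ∀ i, f i = matDot (X i) (Matrix.vecMulVec (fun r => U r i) (fun c => V c i)))
    (fstar : ℝ)
    (hfstar : fstar = Finset.univ.sup' (Finset.univ_nonempty_iff.mpr ⟨⟨0, hk⟩⟩) f) :
    ∀ X' : Matrix (Fin m) (Fin n) ℝ, IsMatchingMatrix X' →
      matDot X' Y ≤ (k : ℝ) * fstar := by
  intro X' hX'
  have hsplit : matDot X' Y = ∑ i : Fin k,
      matDot X' (Matrix.vecMulVec (fun r => U r i) (fun c => V c i)) := by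
    subst hY
    simp only [matDot, Matrix.mul_apply, Matrix.vecMulVec_apply, Matrix.transpose_apply]
    rw [Finset.sum_comm (γ := Fin k)]
    refine Finset.sum_congr rfl fun a _ => ?_
    rw [Finset.sum_comm (γ := Fin k)]
    refine Finset.sum_congr rfl fun b _ => ?_
    rw [Finset.mul_sum]
  rw [hsplit]
  calc ∑ i : Fin k, matDot X' (Matrix.vecMulVec (fun r => U r i) (fun c => V c i))
      ≤ ∑ i : Fin k, f i := by
        apply Finset.sum_le_sum
        intro i _
        rw [hf i]
        exact hXopt i X' hX'
    _ ≤ ∑ _i : Fin k, fstar := by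
        apply Finset.sum_le_sum
        intro i _
        rw [hfstar]
        exact Finset.le_sup' f (Finset.mem_univ i)
    _ = (k : ℝ) * fstar := by simp [mul_comm]
end

section
/- Let u ∈ ℝ^m and v ∈ ℝ^n be entrywise nonnegative vectors and let Y = u vᵀ be the rank-1 matrix Y_{ij} = u_i v_j. Let σ be a permutation of {1,…,m} ordering the entries of u in decreasing order and τ a permutation of {1,…,n} ordering the entries of v in decreasing order. Then the matching obtained by pairing the i-th largest entry of u with the i-th largest entry of v for i = 1,…,min(m,n) is a maximum-weight matching; that is, for every matching matrix X one has X • (u vᵀ) ≤ Σ_{i=1}^{min(m,n)} u_{σ(i)} v_{τ(i)}. -/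
open Matrix Finset

/-- telescoping layer decomposition -/
lemma layer_sum (f : ℕ → ℝ) (m k : ℕ) (hk : k < m) (hfm : f m = 0) :
    f k = ∑ p ∈ Finset.range m, if k ≤ p then f p - f (p+1) else 0 := by
  have h1 : ∑ p ∈ Finset.range m, (if k ≤ p then f p - f (p+1) else 0)
      = ∑ p ∈ Finset.Ico k m, (f p - f (p+1)) := by
    rw [← Finset.sum_filter]
    congr 1
    ext x
    simp only [Finset.mem_filter, Finset.mem_range, Finset.mem_Ico, and_comm]
  rw [h1, Finset.sum_Ico_eq_sub _ hk.le, Finset.sum_range_sub' f m, Finset.sum_range_sub' f k,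
    hfm]
  ring

lemma count_le (m p : ℕ) : ∑ k : Fin m, (if (k:ℕ) ≤ p then (1:ℝ) else 0) ≤ p + 1 := by
  rw [Fin.sum_univ_eq_sum_range (fun k => if k ≤ p then (1:ℝ) else 0)]
  rw [← Finset.sum_filter]
  · calc (∑ _x ∈ (Finset.range m).filter (· ≤ p), (1:ℝ))
        = ((Finset.range m).filter (· ≤ p)).card := by simp
      _ ≤ ((p:ℝ) + 1) := by
          have : ((Finset.range m).filter (· ≤ p)).card ≤ p + 1 := by
            have : ((Finset.range m).filter (· ≤ p)) ⊆ Finset.range (p+1) := by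
              intro x hx
              simp only [Finset.mem_filter, Finset.mem_range] at hx ⊢
              omega
            simpa using Finset.card_le_card this
          exact_mod_cast this

lemma count_eq (N r : ℕ) (h : r < N) :
    ∑ i : Fin N, (if (i:ℕ) ≤ r then (1:ℝ) else 0) = r + 1 := by
  rw [Fin.sum_univ_eq_sum_range (fun i => if i ≤ r then (1:ℝ) else 0)]
  rw [← Finset.sum_filter]
  have : (Finset.range N).filter (· ≤ r) = Finset.range (r+1) := by
    ext x
    simp only [Finset.mem_filter, Finset.mem_range]
    omega
  rw [this]
  simp



lemma sum3_swap {α γ δ M : Type*} [AddCommMonoid M] (s : Finset α) (x : Finset γ)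
    (y : Finset δ) (F : α → γ → δ → M) :
    ∑ a ∈ s, ∑ c ∈ x, ∑ d ∈ y, F a c d = ∑ c ∈ x, ∑ d ∈ y, ∑ a ∈ s, F a c d := by
  rw [Finset.sum_comm]
  exact Finset.sum_congr rfl fun c _ => Finset.sum_comm

lemma sum4_swap {α β γ δ M : Type*} [AddCommMonoid M] (s : Finset α) (t : Finset β)
    (x : Finset γ) (y : Finset δ) (F : α → β → γ → δ → M) :
    ∑ a ∈ s, ∑ b ∈ t, ∑ c ∈ x, ∑ d ∈ y, F a b c d
      = ∑ c ∈ x, ∑ d ∈ y, ∑ a ∈ s, ∑ b ∈ t, F a b c d := by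
  refine (Finset.sum_congr rfl fun a _ => sum3_swap _ _ _ _).trans ?_
  exact sum3_swap _ _ _ _

theorem rank_one_matching_by_sorting
    {m n : ℕ}
    (u : Fin m → ℝ) (v : Fin n → ℝ)
    (hu : ∀ i, 0 ≤ u i) (hv : ∀ j, 0 ≤ v j)
    (σ : Equiv.Perm (Fin m)) (τ : Equiv.Perm (Fin n))
    (hσ : ∀ i i' : Fin m, i ≤ i' → u (σ i') ≤ u (σ i))
    (hτ : ∀ j j' : Fin n, j ≤ j' → v (τ j') ≤ v (τ j)) :
    ∀ X : Matrix (Fin m) (Fin n) ℝ, IsMatchingMatrix X →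
      matDot X (Matrix.vecMulVec u v) ≤
        ∑ i : Fin (min m n),
          u (σ (Fin.castLE (Nat.min_le_left m n) i)) *
          v (τ (Fin.castLE (Nat.min_le_right m n) i)) := by
  intro X hX
  obtain ⟨h01, hrow, hcol⟩ := hX
  have hXnn : ∀ i j, (0:ℝ) ≤ X i j := by
    intro i j; rcases h01 i j with h | h <;> simp [h]
  -- layer functions
  set f : ℕ → ℝ := fun p => if h : p < m then u (σ ⟨p, h⟩) else 0 with hf
  set g : ℕ → ℝ := fun q => if h : q < n then v (τ ⟨q, h⟩) else 0 with hg
  set D : ℕ → ℝ := fun p => f p - f (p+1) with hD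
  set E : ℕ → ℝ := fun q => g q - g (q+1) with hE
  have hfm : f m = 0 := by simp [hf]
  have hgn : g n = 0 := by simp [hg]
  have hDnn : ∀ p, 0 ≤ D p := by
    intro p
    by_cases h1 : p + 1 < m
    · have h0 : p < m := by omega
      have := hσ ⟨p, h0⟩ ⟨p+1, h1⟩ (by simp [Fin.le_def])
      simp only [hD, hf, dif_pos h0, dif_pos h1]
      linarith
    · by_cases h0 : p < m
      · simp only [hD, hf, dif_pos h0, dif_neg h1]
        simpa using hu _
      · simp [hD, hf, h0, h1]
  have hEnn : ∀ q, 0 ≤ E q := by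
    intro q
    by_cases h1 : q + 1 < n
    · have h0 : q < n := by omega
      have := hτ ⟨q, h0⟩ ⟨q+1, h1⟩ (by simp [Fin.le_def])
      simp only [hE, hg, dif_pos h0, dif_pos h1]
      linarith
    · by_cases h0 : q < n
      · simp only [hE, hg, dif_pos h0, dif_neg h1]
        simpa using hv _
      · simp [hE, hg, h0, h1]
  -- layer decomposition of u ∘ σ and v ∘ τ
  have hu_dec : ∀ k : Fin m, u (σ k)
      = ∑ p ∈ Finset.range m, D p * (if (k:ℕ) ≤ p then (1:ℝ) else 0) := by
    intro k
    have h1 : u (σ k) = f (k:ℕ) := by simp [hf, k.isLt]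
    rw [h1, layer_sum f m (k:ℕ) k.isLt hfm]
    refine Finset.sum_congr rfl fun p _ => ?_
    by_cases h : (k:ℕ) ≤ p <;> simp [h, hD]
  have hv_dec : ∀ l : Fin n, v (τ l)
      = ∑ q ∈ Finset.range n, E q * (if (l:ℕ) ≤ q then (1:ℝ) else 0) := by
    intro l
    have h1 : v (τ l) = g (l:ℕ) := by simp [hg, l.isLt]
    rw [h1, layer_sum g n (l:ℕ) l.isLt hgn]
    refine Finset.sum_congr rfl fun q _ => ?_
    by_cases h : (l:ℕ) ≤ q <;> simp [h, hE]
  -- LHS reindexed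
  have L1 : matDot X (Matrix.vecMulVec u v)
      = ∑ k : Fin m, ∑ l : Fin n, X (σ k) (τ l) * (u (σ k) * v (τ l)) := by
    unfold matDot
    simp only [Matrix.vecMulVec_apply]
    rw [← Equiv.sum_comp σ (fun i => ∑ j, X i j * (u i * v j))]
    refine Finset.sum_congr rfl fun k _ => ?_
    rw [← Equiv.sum_comp τ (fun j => X (σ k) j * (u (σ k) * v j))]
  -- four-fold expansion of LHS
  have L2 : matDot X (Matrix.vecMulVec u v)
      = ∑ p ∈ Finset.range m, ∑ q ∈ Finset.range n, D p * E q *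
          (∑ k : Fin m, ∑ l : Fin n, (if (k:ℕ) ≤ p then (1:ℝ) else 0) *
            (X (σ k) (τ l) * (if (l:ℕ) ≤ q then (1:ℝ) else 0))) := by
    rw [L1]
    have hterm : ∀ (k : Fin m) (l : Fin n),
        X (σ k) (τ l) * (u (σ k) * v (τ l))
          = ∑ p ∈ Finset.range m, ∑ q ∈ Finset.range n,
              D p * E q * ((if (k:ℕ) ≤ p then (1:ℝ) else 0) *
                (X (σ k) (τ l) * (if (l:ℕ) ≤ q then (1:ℝ) else 0))) := by
      intro k l
      rw [hu_dec k, hv_dec l, Finset.sum_mul_sum, Finset.mul_sum]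
      refine Finset.sum_congr rfl fun p _ => ?_
      rw [Finset.mul_sum]
      refine Finset.sum_congr rfl fun q _ => ?_
      ring
    simp only [hterm]
    rw [sum4_swap]
    refine Finset.sum_congr rfl fun p _ => Finset.sum_congr rfl fun q _ => ?_
    rw [Finset.mul_sum]
    refine Finset.sum_congr rfl fun k _ => ?_
    rw [Finset.mul_sum]
  -- RHS expansion
  have R2 : (∑ i : Fin (min m n),
        u (σ (Fin.castLE (Nat.min_le_left m n) i)) *
        v (τ (Fin.castLE (Nat.min_le_right m n) i)))
      = ∑ p ∈ Finset.range m, ∑ q ∈ Finset.range n, D p * E q *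
          (∑ i : Fin (min m n), (if (i:ℕ) ≤ p then (1:ℝ) else 0) *
            (if (i:ℕ) ≤ q then (1:ℝ) else 0)) := by
    have hterm : ∀ i : Fin (min m n),
        u (σ (Fin.castLE (Nat.min_le_left m n) i)) *
          v (τ (Fin.castLE (Nat.min_le_right m n) i))
          = ∑ p ∈ Finset.range m, ∑ q ∈ Finset.range n,
              D p * E q * ((if (i:ℕ) ≤ p then (1:ℝ) else 0) *
                (if (i:ℕ) ≤ q then (1:ℝ) else 0)) := by
      intro i
      rw [hu_dec, hv_dec, Finset.sum_mul_sum]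
      refine Finset.sum_congr rfl fun p _ => Finset.sum_congr rfl fun q _ => ?_
      simp only [Fin.coe_castLE]
      ring
    simp only [hterm]
    rw [sum3_swap]
    refine Finset.sum_congr rfl fun p _ => Finset.sum_congr rfl fun q _ => ?_
    rw [Finset.mul_sum]
  rw [L2, R2]
  refine Finset.sum_le_sum fun p hp => Finset.sum_le_sum fun q hq => ?_
  rw [Finset.mem_range] at hp hq
  refine mul_le_mul_of_nonneg_left ?_ (mul_nonneg (hDnn p) (hEnn q))
  -- key counting inequality
  have hC : (∑ i : Fin (min m n), (if (i:ℕ) ≤ p then (1:ℝ) else 0) *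
      (if (i:ℕ) ≤ q then (1:ℝ) else 0)) = (min p q : ℝ) + 1 := by
    have h1 : ∀ i : Fin (min m n), (if (i:ℕ) ≤ p then (1:ℝ) else 0) *
        (if (i:ℕ) ≤ q then (1:ℝ) else 0) = if (i:ℕ) ≤ min p q then (1:ℝ) else 0 := by
      intro i
      by_cases ha : (i:ℕ) ≤ p <;> by_cases hb : (i:ℕ) ≤ q <;>
        simp [ha, hb, Nat.le_min]
    rw [Finset.sum_congr rfl fun i _ => h1 i]
    exact_mod_cast count_eq (min m n) (min p q) (by omega)
  rw [hC]
  -- S ≤ p + 1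
  have hS1 : (∑ k : Fin m, ∑ l : Fin n, (if (k:ℕ) ≤ p then (1:ℝ) else 0) *
      (X (σ k) (τ l) * (if (l:ℕ) ≤ q then (1:ℝ) else 0))) ≤ (p:ℝ) + 1 := by
    have step : ∀ k : Fin m, (∑ l : Fin n, (if (k:ℕ) ≤ p then (1:ℝ) else 0) *
        (X (σ k) (τ l) * (if (l:ℕ) ≤ q then (1:ℝ) else 0)))
          ≤ (if (k:ℕ) ≤ p then (1:ℝ) else 0) := by
      intro k
      rw [← Finset.mul_sum]
      have hinner : (∑ l : Fin n, X (σ k) (τ l) * (if (l:ℕ) ≤ q then (1:ℝ) else 0)) ≤ 1 := by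
        calc (∑ l : Fin n, X (σ k) (τ l) * (if (l:ℕ) ≤ q then (1:ℝ) else 0))
            ≤ ∑ l : Fin n, X (σ k) (τ l) := by
              refine Finset.sum_le_sum fun l _ => ?_
              by_cases h : (l:ℕ) ≤ q <;> simp [h, hXnn]
          _ = ∑ j, X (σ k) j := Equiv.sum_comp τ _
          _ ≤ 1 := hrow (σ k)
      calc (if (k:ℕ) ≤ p then (1:ℝ) else 0) *
            (∑ l : Fin n, X (σ k) (τ l) * (if (l:ℕ) ≤ q then (1:ℝ) else 0))
          ≤ (if (k:ℕ) ≤ p then (1:ℝ) else 0) * 1 := by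
            refine mul_le_mul_of_nonneg_left hinner ?_
            by_cases h : (k:ℕ) ≤ p <;> simp [h]
        _ = (if (k:ℕ) ≤ p then (1:ℝ) else 0) := mul_one _
    calc (∑ k : Fin m, ∑ l : Fin n, (if (k:ℕ) ≤ p then (1:ℝ) else 0) *
          (X (σ k) (τ l) * (if (l:ℕ) ≤ q then (1:ℝ) else 0)))
        ≤ ∑ k : Fin m, (if (k:ℕ) ≤ p then (1:ℝ) else 0) := Finset.sum_le_sum fun k _ => step k
      _ ≤ (p:ℝ) + 1 := count_le m p
  -- S ≤ q + 1
  have hS2 : (∑ k : Fin m, ∑ l : Fin n, (if (k:ℕ) ≤ p then (1:ℝ) else 0) *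
      (X (σ k) (τ l) * (if (l:ℕ) ≤ q then (1:ℝ) else 0))) ≤ (q:ℝ) + 1 := by
    rw [Finset.sum_comm]
    have step : ∀ l : Fin n, (∑ k : Fin m, (if (k:ℕ) ≤ p then (1:ℝ) else 0) *
        (X (σ k) (τ l) * (if (l:ℕ) ≤ q then (1:ℝ) else 0)))
          ≤ (if (l:ℕ) ≤ q then (1:ℝ) else 0) := by
      intro l
      have hre : (∑ k : Fin m, (if (k:ℕ) ≤ p then (1:ℝ) else 0) *
          (X (σ k) (τ l) * (if (l:ℕ) ≤ q then (1:ℝ) else 0)))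
            = (if (l:ℕ) ≤ q then (1:ℝ) else 0) *
              ∑ k : Fin m, (if (k:ℕ) ≤ p then (1:ℝ) else 0) * X (σ k) (τ l) := by
        rw [Finset.mul_sum]
        refine Finset.sum_congr rfl fun k _ => by ring
      rw [hre]
      have hinner : (∑ k : Fin m, (if (k:ℕ) ≤ p then (1:ℝ) else 0) * X (σ k) (τ l)) ≤ 1 := by
        calc (∑ k : Fin m, (if (k:ℕ) ≤ p then (1:ℝ) else 0) * X (σ k) (τ l))
            ≤ ∑ k : Fin m, X (σ k) (τ l) := by
              refine Finset.sum_le_sum fun k _ => ?_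
              by_cases h : (k:ℕ) ≤ p <;> simp [h, hXnn]
          _ = ∑ i, X i (τ l) := Equiv.sum_comp σ (fun i => X i (τ l))
          _ ≤ 1 := hcol (τ l)
      calc (if (l:ℕ) ≤ q then (1:ℝ) else 0) *
            (∑ k : Fin m, (if (k:ℕ) ≤ p then (1:ℝ) else 0) * X (σ k) (τ l))
          ≤ (if (l:ℕ) ≤ q then (1:ℝ) else 0) * 1 := by
            refine mul_le_mul_of_nonneg_left hinner ?_
            by_cases h : (l:ℕ) ≤ q <;> simp [h]
        _ = (if (l:ℕ) ≤ q then (1:ℝ) else 0) := mul_one _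
    calc (∑ l : Fin n, ∑ k : Fin m, (if (k:ℕ) ≤ p then (1:ℝ) else 0) *
          (X (σ k) (τ l) * (if (l:ℕ) ≤ q then (1:ℝ) else 0)))
        ≤ ∑ l : Fin n, (if (l:ℕ) ≤ q then (1:ℝ) else 0) := Finset.sum_le_sum fun l _ => step l
      _ ≤ (q:ℝ) + 1 := count_le n q
  rcases le_total p q with h | h
  · rw [min_eq_left (show (p:ℝ) ≤ q by exact_mod_cast h)]; exact hS1
  · rw [min_eq_right (show (q:ℝ) ≤ p by exact_mod_cast h)]; exact hS2
end

section
/- Let Y = U Vᵀ be a rank-k nonnegative decomposition of Y ∈ ℝ^{m×n} (all entries of U ∈ ℝ^{m×k} and V ∈ ℝ^{n×k} nonnegative), with columns u_i, v_i, and for each i let X_i be a maximum-weight matching matrix for u_i v_iᵀ. Then for each i, the weight of X_i evaluated in the full matrix satisfies Y • X_i ≥ (u_i v_iᵀ) • X_i. Consequently, the matching X_{i*} chosen to maximize Y • X_i over i ∈ {1,…,k} satisfies Y • X_{i*} ≥ (1/k) · X • Y for every matching matrix X (the 'Maximum weight 1/k' variant is still a 1/k-approximation). -/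
open Matrix

theorem max_weight_one_over_k_approximation
    {m n k : ℕ}
    (U : Matrix (Fin m) (Fin k) ℝ) (V : Matrix (Fin n) (Fin k) ℝ)
    (hU : ∀ i j, 0 ≤ U i j) (hV : ∀ i j, 0 ≤ V i j)
    (Y : Matrix (Fin m) (Fin n) ℝ) (hY : Y = U * Vᵀ)
    (X : Fin k → Matrix (Fin m) (Fin n) ℝ)
    (hXmatch : ∀ i, IsMatchingMatrix (X i))
    (hXopt : ∀ i (X' : Matrix (Fin m) (Fin n) ℝ), IsMatchingMatrix X' →
      matDot (Matrix.vecMulVec (fun r => U r i) (fun c => V c i)) X' ≤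
      matDot (Matrix.vecMulVec (fun r => U r i) (fun c => V c i)) (X i))
    (istar : Fin k)
    (histar : ∀ i, matDot Y (X i) ≤ matDot Y (X istar)) :
    (∀ i, matDot (Matrix.vecMulVec (fun r => U r i) (fun c => V c i)) (X i) ≤
        matDot Y (X i)) ∧
    (∀ X' : Matrix (Fin m) (Fin n) ℝ, IsMatchingMatrix X' →
      (1 / (k : ℝ)) * matDot X' Y ≤ matDot Y (X istar)) := by

  have hk : 0 < k := istar.pos
  -- decomposition of matDot Y Z into rank-one pieces
  have hsum : ∀ Z : Matrix (Fin m) (Fin n) ℝ,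
      matDot Y Z = ∑ i, matDot (Matrix.vecMulVec (fun r => U r i) (fun c => V c i)) Z := by
    intro Z
    simp only [matDot, hY, Matrix.mul_apply, Matrix.transpose_apply, Matrix.vecMulVec_apply,
      Finset.sum_mul]
    rw [Finset.sum_congr rfl fun r _ => Finset.sum_comm, Finset.sum_comm]
  have hnn : ∀ (Z : Matrix (Fin m) (Fin n) ℝ), IsMatchingMatrix Z → ∀ i,
      0 ≤ matDot (Matrix.vecMulVec (fun r => U r i) (fun c => V c i)) Z := by
    intro Z hZ i
    apply Finset.sum_nonneg; intro r _; apply Finset.sum_nonneg; intro c _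
    have hz : 0 ≤ Z r c := by rcases hZ.1 r c with h | h <;> rw [h] <;> norm_num
    exact mul_nonneg (mul_nonneg (hU r i) (hV c i)) hz
  have hle : ∀ (Z : Matrix (Fin m) (Fin n) ℝ), IsMatchingMatrix Z → ∀ i,
      matDot (Matrix.vecMulVec (fun r => U r i) (fun c => V c i)) Z ≤ matDot Y Z := by
    intro Z hZ i
    rw [hsum Z]
    exact Finset.single_le_sum (fun j _ => hnn Z hZ j) (Finset.mem_univ i)
  refine ⟨fun i => hle (X i) (hXmatch i) i, ?_⟩
  intro X' hX'
  have h1 : matDot X' Y = matDot Y X' := by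
    simp only [matDot]; congr 1; ext r; congr 1; ext c; ring
  have h2 : matDot Y X' ≤ (k : ℝ) * matDot Y (X istar) := by
    rw [hsum X']
    calc ∑ i, matDot (Matrix.vecMulVec (fun r => U r i) (fun c => V c i)) X'
        ≤ ∑ i, matDot Y (X istar) := by
          apply Finset.sum_le_sum
          intro i _
          exact le_trans (hXopt i X' hX') (le_trans (hle (X i) (hXmatch i) i) (histar i))
      _ = (k : ℝ) * matDot Y (X istar) := by
          rw [Finset.sum_const, Finset.card_univ, Fintype.card_fin, nsmul_eq_mul]
  rw [h1, div_mul_eq_mul_div, one_mul, div_le_iff₀ (by positivity)]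
  linarith [h2]
end

section
/- Let Y = U Vᵀ be a rank-k nonnegative decomposition of Y ∈ ℝ^{m×n} (all entries of U ∈ ℝ^{m×k} and V ∈ ℝ^{n×k} nonnegative), with columns u_i, v_i, and for each i let X_i be a maximum-weight matching matrix for u_i v_iᵀ. Let E = ∪_{i=1}^{k} supp(X_i) ⊆ {1,…,m}×{1,…,n} be the union of the supports of these matchings, and let X' be a matching matrix maximizing Y • X' among all matching matrices whose support is contained in E. Then Y • X' ≥ max_i (u_i v_iᵀ) • X_i, and hence Y • X' ≥ (1/k) · X • Y for every matching matrix X (the 'Union of matchings' variant is still a 1/k-approximation). -/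
open Matrix

/-- Support of a matrix: the set of index pairs with nonzero entry. -/
def matSupport {m n : ℕ} (X : Matrix (Fin m) (Fin n) ℝ) : Set (Fin m × Fin n) :=
  { p | X p.1 p.2 ≠ 0 }

lemma matDot_comm {m n : ℕ} (A B : Matrix (Fin m) (Fin n) ℝ) :
    matDot A B = matDot B A := by
  unfold matDot
  exact Finset.sum_congr rfl fun i _ => Finset.sum_congr rfl fun j _ => mul_comm _ _

lemma matDot_expand {m n k : ℕ}
    (U : Matrix (Fin m) (Fin k) ℝ) (V : Matrix (Fin n) (Fin k) ℝ)
    (B : Matrix (Fin m) (Fin n) ℝ) :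
    matDot (U * Vᵀ) B =
      ∑ l, matDot (Matrix.vecMulVec (fun r => U r l) (fun c => V c l)) B := by
  unfold matDot
  simp only [Matrix.mul_apply, Matrix.transpose_apply, Matrix.vecMulVec_apply,
    Finset.sum_mul]
  conv_rhs => rw [Finset.sum_comm]
  refine Finset.sum_congr rfl fun i _ => ?_
  apply Finset.sum_comm

theorem union_of_matchings_one_over_k_approximation
    {m n k : ℕ}
    (U : Matrix (Fin m) (Fin k) ℝ) (V : Matrix (Fin n) (Fin k) ℝ)
    (hU : ∀ i j, 0 ≤ U i j) (hV : ∀ i j, 0 ≤ V i j)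
    (Y : Matrix (Fin m) (Fin n) ℝ) (hY : Y = U * Vᵀ)
    (X : Fin k → Matrix (Fin m) (Fin n) ℝ)
    (hXmatch : ∀ i, IsMatchingMatrix (X i))
    (hXopt : ∀ i (Z : Matrix (Fin m) (Fin n) ℝ), IsMatchingMatrix Z →
      matDot Z (Matrix.vecMulVec (fun r => U r i) (fun c => V c i)) ≤
      matDot (X i) (Matrix.vecMulVec (fun r => U r i) (fun c => V c i)))
    (E : Set (Fin m × Fin n)) (hE : E = ⋃ i : Fin k, matSupport (X i))
    (X' : Matrix (Fin m) (Fin n) ℝ)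
    (hX'match : IsMatchingMatrix X')
    (hX'supp : matSupport X' ⊆ E)
    (hX'opt : ∀ Z : Matrix (Fin m) (Fin n) ℝ, IsMatchingMatrix Z →
      matSupport Z ⊆ E → matDot Y Z ≤ matDot Y X') :
    (∀ i, matDot (Matrix.vecMulVec (fun r => U r i) (fun c => V c i)) (X i) ≤
        matDot Y X') ∧
    (∀ Z : Matrix (Fin m) (Fin n) ℝ, IsMatchingMatrix Z →
      (1 / (k : ℝ)) * matDot Z Y ≤ matDot Y X') := by
  subst hY
  -- nonnegativity of each rank-one term against a nonneg matrix
  have hterm : ∀ (l : Fin k) (B : Matrix (Fin m) (Fin n) ℝ), (∀ i j, 0 ≤ B i j) →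
      0 ≤ matDot (Matrix.vecMulVec (fun r => U r l) (fun c => V c l)) B := by
    intro l B hB
    unfold matDot
    apply Finset.sum_nonneg; intro i _
    apply Finset.sum_nonneg; intro j _
    have : Matrix.vecMulVec (fun r => U r l) (fun c => V c l) i j = U i l * V j l := rfl
    rw [this]
    exact mul_nonneg (mul_nonneg (hU i l) (hV j l)) (hB i j)
  have hXnn : ∀ (i : Fin k) r c, 0 ≤ X i r c := by
    intro i r c
    rcases (hXmatch i).1 r c with h | h <;> simp [h]
  have hpart1 : ∀ i, matDot (Matrix.vecMulVec (fun r => U r i) (fun c => V c i)) (X i) ≤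
      matDot (U * Vᵀ) X' := by
    intro i
    have h1 : matDot (Matrix.vecMulVec (fun r => U r i) (fun c => V c i)) (X i) ≤
        matDot (U * Vᵀ) (X i) := by
      rw [matDot_expand]
      exact Finset.single_le_sum (f := fun l =>
        matDot (Matrix.vecMulVec (fun r => U r l) (fun c => V c l)) (X i))
        (fun l _ => hterm l (X i) (hXnn i)) (Finset.mem_univ i)
    have hsupp : matSupport (X i) ⊆ E := by
      rw [hE]; exact Set.subset_iUnion (fun l => matSupport (X l)) i
    exact h1.trans (hX'opt (X i) (hXmatch i) hsupp)
  refine ⟨hpart1, fun Z hZ => ?_⟩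
  have hsum : matDot Z (U * Vᵀ) ≤ (k : ℝ) * matDot (U * Vᵀ) X' := by
    rw [matDot_comm, matDot_expand]
    calc ∑ l, matDot (Matrix.vecMulVec (fun r => U r l) (fun c => V c l)) Z
        ≤ ∑ l : Fin k, matDot (U * Vᵀ) X' := by
          apply Finset.sum_le_sum
          intro l _
          have := hXopt l Z hZ
          rw [matDot_comm] at this
          refine this.trans ?_
          rw [matDot_comm]
          exact hpart1 l
      _ = (k : ℝ) * matDot (U * Vᵀ) X' := by simp [Finset.sum_const, mul_comm]
  rcases Nat.eq_zero_or_pos k with hk | hk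
  · subst hk
    have hU0 : U * Vᵀ = 0 := by
      ext i j; simp [Matrix.mul_apply]
    have hZY : matDot Z (U * Vᵀ) = 0 := by
      rw [matDot_comm, matDot_expand]; simp
    have hYX' : matDot (U * Vᵀ) X' = 0 := by
      rw [matDot_expand]; simp
    rw [hZY, hYX']; simp
  · have hk' : (0 : ℝ) < k := by exact_mod_cast hk
    rw [div_mul_eq_mul_div, one_mul, div_le_iff₀ hk']
    calc matDot Z (U * Vᵀ) ≤ (k:ℝ) * matDot (U * Vᵀ) X' := hsum
      _ = matDot (U * Vᵀ) X' * (k:ℝ) := mul_comm _ _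
end

section
/- Let P ∈ ℝ^{m×m}, Q ∈ ℝ^{n×n}, u ∈ ℝ^m, v ∈ ℝ^n and α ∈ ℝ, and define Y^(0) = u vᵀ, Y^(j) = α P Y^(j-1) Qᵀ + (1−α) u vᵀ for j ≥ 1. Then for every t ≥ 0 the matrix Y^(t) has rank at most t+1. -/
open Matrix

lemma my_rank_add_le {m n : ℕ} (A B : Matrix (Fin m) (Fin n) ℝ) :
    (A + B).rank ≤ A.rank + B.rank := by
  unfold Matrix.rank
  refine le_trans (Submodule.finrank_mono ?_)
    (Submodule.finrank_add_le_finrank_add_finrank _ _)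
  rw [Matrix.mulVecLin_add]
  rintro x ⟨y, rfl⟩
  exact Submodule.add_mem_sup ⟨y, rfl⟩ ⟨y, rfl⟩

lemma my_rank_smul_le {m n : ℕ} (c : ℝ) (A : Matrix (Fin m) (Fin n) ℝ) :
    (c • A).rank ≤ A.rank := by
  rcases eq_or_ne c 0 with h | h
  · simp [h, Matrix.rank_zero]
  · have : c • A = (c • (1 : Matrix (Fin m) (Fin m) ℝ)) * A := by
      rw [Matrix.smul_mul, Matrix.one_mul]
    rw [this]
    exact Matrix.rank_mul_le_right _ _

lemma my_rank_vecMulVec_le {m n : ℕ} (u : Fin m → ℝ) (v : Fin n → ℝ) :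
    (Matrix.vecMulVec u v).rank ≤ 1 := by
  rw [Matrix.vecMulVec_eq (Fin 1)]
  calc (Matrix.replicateCol (Fin 1) u * Matrix.replicateRow (Fin 1) v).rank
      ≤ (Matrix.replicateCol (Fin 1) u).rank := Matrix.rank_mul_le_left _ _
    _ ≤ Fintype.card (Fin 1) := Matrix.rank_le_card_width _
    _ = 1 := Fintype.card_fin 1

theorem nsd_rank_bound
    {m n : ℕ}
    (P : Matrix (Fin m) (Fin m) ℝ) (Q : Matrix (Fin n) (Fin n) ℝ)
    (u : Fin m → ℝ) (v : Fin n → ℝ) (α : ℝ)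
    (Y : ℕ → Matrix (Fin m) (Fin n) ℝ)
    (hY0 : Y 0 = Matrix.vecMulVec u v)
    (hYrec : ∀ j : ℕ, Y (j + 1) = α • (P * Y j * Qᵀ) + (1 - α) • Matrix.vecMulVec u v) :
    ∀ t : ℕ, (Y t).rank ≤ t + 1 := by
  intro t
  induction t with
  | zero => rw [hY0]; exact my_rank_vecMulVec_le u v
  | succ t ih =>
    rw [hYrec t]
    calc (α • (P * Y t * Qᵀ) + (1 - α) • Matrix.vecMulVec u v).rank
        ≤ (α • (P * Y t * Qᵀ)).rank + ((1 - α) • Matrix.vecMulVec u v).rank :=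
          my_rank_add_le _ _
      _ ≤ (P * Y t * Qᵀ).rank + 1 :=
          add_le_add (my_rank_smul_le _ _)
            ((my_rank_smul_le _ _).trans (my_rank_vecMulVec_le u v))
      _ ≤ (Y t).rank + 1 := by
          gcongr
          exact (Matrix.rank_mul_le_left _ _).trans (Matrix.rank_mul_le_right _ _)
      _ ≤ (t + 1) + 1 := by omega
end
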